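/- arXiv:1904.10747 — 4 statements merged into one kernel-verified Lean document; each statement's English description precedes it below -/
import Mathlib

section
/- Let t* ∈ (0, ∞) be finite, let c1, c5 > 0, and let φ : [0, t*) → ℝ be continuous on [0, t*), differentiable on (0, t*), with φ(0) > 0, φ(t) > 0 for all t, φ(t) → ∞ as t → t*⁻, and φ'(t) ≤ c1·φ(t) + c5·φ(t)³ for all t ∈ (0, t*). Then t* ≥ (1/(2c1))·log(1 + (c1/c5)·φ(0)⁻²). -/
/-! If `G' = -1/F` and `φ' ≤ F(φ)`, then `t ↦ G(φ t) + t` is nondecreasing; when `G` vanishes at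
infinity and `φ` blows up at `t*`, letting `t → t*` gives `G(φ 0) ≤ t*`. For `F y = c₁ y + c₅ y³`
this `G` is `cubicBlowUpTime c₁ c₅`. -/

open Real Set Filter Topology

/-- The blow-up time of the solution of `y' = c₁ y + c₅ y³`, `y(0) = x`. -/
noncomputable def cubicBlowUpTime (c₁ c₅ x : ℝ) : ℝ :=
  1 / (2 * c₁) * Real.log (1 + c₁ / c₅ * (x ^ 2)⁻¹)

theorem hasDerivAt_cubicBlowUpTime {c₁ c₅ x : ℝ} (hc₁ : 0 < c₁) (hc₅ : 0 < c₅) (hx : 0 < x) :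
    HasDerivAt (cubicBlowUpTime c₁ c₅) (-(c₁ * x + c₅ * x ^ 3)⁻¹) x := by
  have hlog : 1 + c₁ / c₅ * (x ^ 2)⁻¹ ≠ 0 := by positivity
  have h := ((((hasDerivAt_pow 2 x).inv (by positivity)).const_mul (c₁ / c₅)).const_add 1).log
    hlog |>.const_mul (1 / (2 * c₁))
  refine HasDerivAt.congr_deriv (f := cubicBlowUpTime c₁ c₅) h ?_
  simp only [Pi.inv_apply]
  field_simp
  ring

theorem tendsto_cubicBlowUpTime_atTop (c₁ c₅ : ℝ) :
    Tendsto (cubicBlowUpTime c₁ c₅) atTop (𝓝 0) := by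
  have hinv : Tendsto (fun x : ℝ => 1 + c₁ / c₅ * (x ^ 2)⁻¹) atTop (𝓝 1) := by
    simpa using ((tendsto_inv_atTop_zero.comp (tendsto_pow_atTop two_ne_zero)).const_mul
      (c₁ / c₅)).const_add 1
  have h := ((continuousAt_log one_ne_zero).tendsto.comp hinv).const_mul (1 / (2 * c₁))
  rw [log_one, mul_zero] at h
  exact h

theorem monotoneOn_comp_add_id_of_deriv_le {T : ℝ} {φ G F : ℝ → ℝ}
    (hG : ∀ x > 0, HasDerivAt G (-(F x)⁻¹) x) (hF : ∀ x > 0, 0 < F x)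
    (hcont : ContinuousOn φ (Ico 0 T)) (hdiff : ∀ t ∈ Ioo 0 T, DifferentiableAt ℝ φ t)
    (hpos : ∀ t ∈ Ico 0 T, 0 < φ t) (hineq : ∀ t ∈ Ioo 0 T, deriv φ t ≤ F (φ t)) :
    MonotoneOn (fun t => G (φ t) + t) (Ico 0 T) := by
  have hGcont : ContinuousOn G (Ioi 0) := fun x hx => (hG x hx).continuousAt.continuousWithinAt
  refine monotoneOn_of_hasDerivWithinAt_nonneg (f' := fun t => -(F (φ t))⁻¹ * deriv φ t + 1)
    (convex_Ico 0 T) ((hGcont.comp hcont hpos).add continuousOn_id) (fun t ht => ?_)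
    (fun t ht => ?_)
  · rw [interior_Ico] at ht
    have hφt := hpos t (Ioo_subset_Ico_self ht)
    exact (((hG _ hφt).comp t (hdiff t ht).hasDerivAt).add (hasDerivAt_id t)).hasDerivWithinAt
  · rw [interior_Ico] at ht
    have hFt := hF _ (hpos t (Ioo_subset_Ico_self ht))
    have hratio : (F (φ t))⁻¹ * deriv φ t ≤ 1 := by
      rw [inv_mul_le_iff₀ hFt, mul_one]
      exact hineq t ht
    linarith

theorem le_of_monotoneOn_add_id_of_tendsto {T : ℝ} {ψ : ℝ → ℝ} (hT : 0 < T)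
    (hmono : MonotoneOn (fun t => ψ t + t) (Ico 0 T)) (hlim : Tendsto ψ (𝓝[<] T) (𝓝 0)) :
    ψ 0 ≤ T := by
  have hsum : Tendsto (fun t => ψ t + t) (𝓝[<] T) (𝓝 T) := by
    simpa using hlim.add (tendsto_nhdsWithin_of_tendsto_nhds tendsto_id)
  refine ge_of_tendsto hsum ?_
  filter_upwards [Ioo_mem_nhdsLT hT] with t ht
  simpa using hmono (left_mem_Ico.2 hT) (Ioo_subset_Ico_self ht) ht.1.le

theorem blow_up_time_lower_bound_3D_general
    (tstar c1 c5 : ℝ) (htstar : 0 < tstar) (hc1 : 0 < c1) (hc5 : 0 < c5)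
    (φ : ℝ → ℝ)
    (hcont : ContinuousOn φ (Ico 0 tstar))
    (hdiff : ∀ t ∈ Ioo 0 tstar, DifferentiableAt ℝ φ t)
    (hpos : ∀ t ∈ Ico 0 tstar, 0 < φ t)
    (hblow : Tendsto φ (nhdsWithin tstar (Iio tstar)) atTop)
    (hineq : ∀ t ∈ Ioo 0 tstar, deriv φ t ≤ c1 * φ t + c5 * φ t ^ 3) :
    tstar ≥ 1 / (2 * c1) * Real.log (1 + c1 / c5 * (φ 0 ^ 2)⁻¹) := by
  have hmono : MonotoneOn (fun t => cubicBlowUpTime c1 c5 (φ t) + t) (Ico 0 tstar) :=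
    monotoneOn_comp_add_id_of_deriv_le (fun x hx => hasDerivAt_cubicBlowUpTime hc1 hc5 hx)
      (fun x hx => by positivity) hcont hdiff hpos hineq
  exact le_of_monotoneOn_add_id_of_tendsto htstar hmono
    ((tendsto_cubicBlowUpTime_atTop c1 c5).comp hblow)

/-- ODE comparison core of Theorem 3.1 (lower bound of the blow-up time in 3D):
if `φ > 0` blows up at the finite time `tstar` and satisfies
`φ' ≤ c1 φ + c5 φ³` on `(0, tstar)`, then
`tstar ≥ (1/(2 c1)) log (1 + (c1/c5) φ(0)⁻²)`. -/
theorem blow_up_time_lower_bound_3D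
    (tstar c1 c5 : ℝ) (htstar : 0 < tstar) (hc1 : 0 < c1) (hc5 : 0 < c5)
    (φ : ℝ → ℝ)
    (hcont : ContinuousOn φ (Ico 0 tstar))
    (hdiff : ∀ t ∈ Ioo 0 tstar, DifferentiableAt ℝ φ t)
    (hφ0 : 0 < φ 0)
    (hpos : ∀ t ∈ Ico 0 tstar, 0 < φ t)
    (hblow : Tendsto φ (nhdsWithin tstar (Iio tstar)) atTop)
    (hineq : ∀ t ∈ Ioo 0 tstar, deriv φ t ≤ c1 * φ t + c5 * φ t ^ 3) :
    tstar ≥ 1 / (2 * c1) * Real.log (1 + c1 / c5 * (φ 0 ^ 2)⁻¹) :=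
  blow_up_time_lower_bound_3D_general tstar c1 c5 htstar hc1 hc5 φ hcont hdiff hpos hblow hineq
end

section
/- Let t* ∈ (0, ∞) be finite, let c1, c5 > 0, and let φ : [0, t*) → ℝ be continuous on [0, t*), differentiable on (0, t*), with φ(0) > 0, φ(t) > 0 for all t, φ(t) → ∞ as t → t*⁻, and φ'(t) ≤ c1·φ(t) + c5·φ(t)² for all t ∈ (0, t*). Then t* ≥ (1/c1)·log(1 + (c1/c5)·φ(0)⁻¹). -/
/-!
Let `T(y)` be the time the Riccati equation `y' = c1 y + c5 y²` needs to blow up from `y`.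
Since `T'(y) = -1 / (c1 y + c5 y²)`, the inequality `φ' ≤ c1 φ + c5 φ²` says exactly that
`t + T(φ(t))` is nondecreasing. As `φ(t) → ∞` for `t → t*⁻`, `T(φ(t)) → 0`,
so `T(φ(0)) ≤ t*`.
-/

open Real Set Filter Topology

noncomputable section

/-- `∫_y^∞ ds / (c1 s + c5 s²)` -/
def riccatiBlowUpTime (c1 c5 y : ℝ) : ℝ := 1 / c1 * Real.log (1 + c1 / c5 * y⁻¹)

theorem hasDerivAt_riccatiBlowUpTime {c1 c5 y : ℝ} (hc1 : 0 < c1) (hc5 : 0 < c5) (hy : 0 < y) :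
    HasDerivAt (riccatiBlowUpTime c1 c5) (-(c1 * y + c5 * y ^ 2)⁻¹) y := by
  have harg : 1 + c1 / c5 * y⁻¹ ≠ 0 := by positivity
  have h := (((hasDerivAt_inv hy.ne').const_mul (c1 / c5)).const_add 1).log harg
    |>.const_mul (1 / c1)
  refine h.congr_deriv ?_
  field_simp
  ring

theorem tendsto_riccatiBlowUpTime_atTop (c1 c5 : ℝ) :
    Tendsto (riccatiBlowUpTime c1 c5) atTop (𝓝 0) := by
  have h : Tendsto (fun y : ℝ => 1 + c1 / c5 * y⁻¹) atTop (𝓝 1) := by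
    simpa using (tendsto_inv_atTop_zero.const_mul (c1 / c5)).const_add 1
  have hT := ((continuousAt_log one_ne_zero).tendsto.comp h).const_mul (1 / c1)
  rwa [log_one, mul_zero] at hT

theorem monotoneOn_add_riccatiBlowUpTime_comp {a b c1 c5 : ℝ} {φ : ℝ → ℝ}
    (hc1 : 0 < c1) (hc5 : 0 < c5)
    (hcont : ContinuousOn φ (Ico a b))
    (hdiff : ∀ t ∈ Ioo a b, DifferentiableAt ℝ φ t)
    (hpos : ∀ t ∈ Ico a b, 0 < φ t)
    (hineq : ∀ t ∈ Ioo a b, deriv φ t ≤ c1 * φ t + c5 * φ t ^ 2) :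
    MonotoneOn (fun t => t + riccatiBlowUpTime c1 c5 (φ t)) (Ico a b) := by
  have hT : ∀ t ∈ Ico a b,
      HasDerivAt (riccatiBlowUpTime c1 c5) (-(c1 * φ t + c5 * φ t ^ 2)⁻¹) (φ t) :=
    fun t ht => hasDerivAt_riccatiBlowUpTime hc1 hc5 (hpos t ht)
  have hderiv : ∀ t ∈ Ioo a b, HasDerivAt (fun t => t + riccatiBlowUpTime c1 c5 (φ t))
      (1 + -(c1 * φ t + c5 * φ t ^ 2)⁻¹ * deriv φ t) t := fun t ht =>
    (hasDerivAt_id t).add ((hT t (Ioo_subset_Ico_self ht)).comp t (hdiff t ht).hasDerivAt)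
  refine monotoneOn_of_deriv_nonneg (convex_Ico a b) ?_ ?_ ?_
  · exact continuousOn_id.add fun t ht =>
      (hT t ht).continuousAt.comp_continuousWithinAt (hcont t ht)
  · rw [interior_Ico]
    exact fun t ht => (hderiv t ht).differentiableAt.differentiableWithinAt
  · rw [interior_Ico]
    intro t ht
    have hφ := hpos t (Ioo_subset_Ico_self ht)
    have hquot : deriv φ t / (c1 * φ t + c5 * φ t ^ 2) ≤ 1 :=
      div_le_one_of_le₀ (hineq t ht) (by positivity)
    rw [(hderiv t ht).deriv, neg_mul, inv_mul_eq_div]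
    linarith

theorem add_riccatiBlowUpTime_le {a b c1 c5 : ℝ} {φ : ℝ → ℝ}
    (hab : a < b) (hc1 : 0 < c1) (hc5 : 0 < c5)
    (hcont : ContinuousOn φ (Ico a b))
    (hdiff : ∀ t ∈ Ioo a b, DifferentiableAt ℝ φ t)
    (hpos : ∀ t ∈ Ico a b, 0 < φ t)
    (hblow : Tendsto φ (𝓝[<] b) atTop)
    (hineq : ∀ t ∈ Ioo a b, deriv φ t ≤ c1 * φ t + c5 * φ t ^ 2) :
    a + riccatiBlowUpTime c1 c5 (φ a) ≤ b := by
  have hmono := monotoneOn_add_riccatiBlowUpTime_comp hc1 hc5 hcont hdiff hpos hineq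
  have hlim : Tendsto (fun t => t + riccatiBlowUpTime c1 c5 (φ t)) (𝓝[<] b) (𝓝 (b + 0)) :=
    (tendsto_id.mono_left nhdsWithin_le_nhds).add
      ((tendsto_riccatiBlowUpTime_atTop c1 c5).comp hblow)
  rw [← add_zero b]
  refine ge_of_tendsto hlim ?_
  filter_upwards [Ioo_mem_nhdsLT hab] with t ht
  exact hmono (left_mem_Ico.2 hab) (Ioo_subset_Ico_self ht) ht.1.le

end

theorem blow_up_time_lower_bound_2D_general
    (tstar c1 c5 : ℝ) (htstar : 0 < tstar) (hc1 : 0 < c1) (hc5 : 0 < c5)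
    (φ : ℝ → ℝ)
    (hcont : ContinuousOn φ (Ico 0 tstar))
    (hdiff : ∀ t ∈ Ioo 0 tstar, DifferentiableAt ℝ φ t)
    (hpos : ∀ t ∈ Ico 0 tstar, 0 < φ t)
    (hblow : Tendsto φ (nhdsWithin tstar (Iio tstar)) atTop)
    (hineq : ∀ t ∈ Ioo 0 tstar, deriv φ t ≤ c1 * φ t + c5 * φ t ^ 2) :
    tstar ≥ 1 / c1 * Real.log (1 + c1 / c5 * (φ 0)⁻¹) := by
  simpa [riccatiBlowUpTime] using
    add_riccatiBlowUpTime_le htstar hc1 hc5 hcont hdiff hpos hblow hineq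

/-- ODE comparison core of Theorem 3.2 (lower bound of the blow-up time in 2D):
if `φ > 0` blows up at the finite time `tstar` and satisfies
`φ' ≤ c1 φ + c5 φ²` on `(0, tstar)`, then
`tstar ≥ (1/c1) log (1 + (c1/c5) φ(0)⁻¹)`. -/
theorem blow_up_time_lower_bound_2D
    (tstar c1 c5 : ℝ) (htstar : 0 < tstar) (hc1 : 0 < c1) (hc5 : 0 < c5)
    (φ : ℝ → ℝ)
    (hcont : ContinuousOn φ (Ico 0 tstar))
    (hdiff : ∀ t ∈ Ioo 0 tstar, DifferentiableAt ℝ φ t)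
    (hφ0 : 0 < φ 0)
    (hpos : ∀ t ∈ Ico 0 tstar, 0 < φ t)
    (hblow : Tendsto φ (nhdsWithin tstar (Iio tstar)) atTop)
    (hineq : ∀ t ∈ Ioo 0 tstar, deriv φ t ≤ c1 * φ t + c5 * φ t ^ 2) :
    tstar ≥ 1 / c1 * Real.log (1 + c1 / c5 * (φ 0)⁻¹) :=
  blow_up_time_lower_bound_2D_general tstar c1 c5 htstar hc1 hc5 φ hcont hdiff hpos hblow hineq
end

section
/- Let t* ∈ (0, ∞) be finite, let c1, c2, c3 > 0, and let φ : [0, t*) → ℝ be continuous on [0, t*), differentiable on (0, t*), with φ(0) > 0, φ(t) > 0 for all t, φ(t) → ∞ as t → t*⁻, and φ'(t) ≤ c1·φ(t) + c2·φ(t)^{3/2} + c3·φ(t)³ for all t ∈ (0, t*). Then the function τ ↦ 1/(c1·τ + c2·τ^{3/2} + c3·τ³) is integrable on [φ(0), ∞) and t* ≥ ∫_{φ(0)}^{∞} dτ/(c1·τ + c2·τ^{3/2} + c3·τ³). -/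
open Real Set Filter MeasureTheory

/-- Auxiliary: the general comparison lemma for a positive function `g`. -/
lemma blow_up_aux
    (tstar : ℝ) (htstar : 0 < tstar)
    (φ : ℝ → ℝ) (g : ℝ → ℝ)
    (hgpos : ∀ τ : ℝ, 0 < τ → 0 < g τ)
    (hgcont : ∀ τ : ℝ, 0 < τ → ContinuousAt g τ)
    (hcont : ContinuousOn φ (Ico 0 tstar))
    (hdiff : ∀ t ∈ Ioo 0 tstar, DifferentiableAt ℝ φ t)
    (hφ0 : 0 < φ 0)
    (hpos : ∀ t ∈ Ico 0 tstar, 0 < φ t)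
    (hblow : Tendsto φ (nhdsWithin tstar (Iio tstar)) atTop)
    (hineq : ∀ t ∈ Ioo 0 tstar, deriv φ t ≤ g (φ t))
    (hint : IntegrableOn (fun τ : ℝ => 1 / g τ) (Ioi (φ 0))) :
    tstar ≥ ∫ τ in Ioi (φ 0), 1 / g τ := by
  set a := φ 0 with ha
  set f : ℝ → ℝ := fun τ => 1 / g τ with hfdef
  have hfc : ∀ τ : ℝ, 0 < τ → ContinuousAt f τ := fun τ hτ =>
    continuousAt_const.div (hgcont τ hτ) (hgpos τ hτ).ne'
  have hfco : ContinuousOn f (Ioi 0) := fun τ hτ => (hfc τ hτ).continuousWithinAt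
  -- interval integrability
  have hFi : ∀ x : ℝ, 0 < x → IntervalIntegrable f MeasureTheory.volume a x := by
    intro x hx
    apply ContinuousOn.intervalIntegrable
    intro τ hτ
    exact (hfc τ (lt_of_lt_of_le (lt_min hφ0 hx) hτ.1)).continuousWithinAt
  -- FTC derivative
  have hFD : ∀ x : ℝ, 0 < x → HasDerivAt (fun u => ∫ τ in a..u, f τ) (f x) x := by
    intro x hx
    exact intervalIntegral.integral_hasDerivAt_right (hFi x hx)
      (hfco.stronglyMeasurableAtFilter isOpen_Ioi x hx) (hfc x hx)
  have hFcont : ContinuousOn (fun u => ∫ τ in a..u, f τ) (Ioi 0) := fun x hx =>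
    (hFD x hx).continuousAt.continuousWithinAt
  -- key inequality
  have key : ∀ t ∈ Ico 0 tstar, (∫ τ in a..(φ t), f τ) ≤ t := by
    intro t ht
    rcases eq_or_lt_of_le ht.1 with h0 | h0
    · rw [← h0, ← ha, intervalIntegral.integral_same]
    · set G : ℝ → ℝ := fun s => s - ∫ τ in a..(φ s), f τ with hG
      have hGd : ∀ s ∈ Ioo 0 tstar, HasDerivAt G (1 - f (φ s) * deriv φ s) s := by
        intro s hs
        have hφd : HasDerivAt φ (deriv φ s) s := (hdiff s hs).hasDerivAt
        have hc : HasDerivAt (fun u => ∫ τ in a..(φ u), f τ) (f (φ s) * deriv φ s) s :=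
          (hFD (φ s) (hpos s ⟨hs.1.le, hs.2⟩)).comp s hφd
        exact (hasDerivAt_id s).sub hc
      have hIcc : Icc 0 t ⊆ Ico 0 tstar := fun s hs => ⟨hs.1, lt_of_le_of_lt hs.2 ht.2⟩
      have hGcont : ContinuousOn G (Icc 0 t) := by
        apply ContinuousOn.sub continuousOn_id
        exact hFcont.comp (hcont.mono hIcc) (fun s hs => hpos s (hIcc hs))
      have hintr : interior (Icc (0:ℝ) t) = Ioo 0 t := interior_Icc
      have hsub : Ioo 0 t ⊆ Ioo 0 tstar := fun s hs => ⟨hs.1, lt_trans hs.2 ht.2⟩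
      have hGdiff : DifferentiableOn ℝ G (interior (Icc (0:ℝ) t)) := by
        rw [hintr]
        exact fun s hs => ((hGd s (hsub hs)).differentiableAt).differentiableWithinAt
      have hGderiv : ∀ s ∈ interior (Icc (0:ℝ) t), 0 ≤ deriv G s := by
        rw [hintr]
        intro s hs
        have hs' := hsub hs
        rw [(hGd s hs').deriv]
        have hgφ : 0 < g (φ s) := hgpos _ (hpos s ⟨hs'.1.le, hs'.2⟩)
        have : f (φ s) * deriv φ s ≤ 1 := by
          have hfr : f (φ s) = 1 / g (φ s) := rfl
          rw [hfr, one_div, inv_mul_eq_div]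
          exact (div_le_one hgφ).2 (hineq s hs')
        linarith
      have hmono : MonotoneOn G (Icc 0 t) :=
        monotoneOn_of_deriv_nonneg (convex_Icc 0 t) hGcont hGdiff hGderiv
      have h01 : (0:ℝ) ∈ Icc (0:ℝ) t := ⟨le_refl _, h0.le⟩
      have ht1 : t ∈ Icc (0:ℝ) t := ⟨h0.le, le_refl _⟩
      have := hmono h01 ht1 h0.le
      simp only [hG, ← ha, intervalIntegral.integral_same, sub_zero] at this
      linarith
  -- take limits
  have hlim : Tendsto (fun t => ∫ τ in a..(φ t), f τ) (nhdsWithin tstar (Iio tstar))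
      (nhds (∫ τ in Ioi a, f τ)) :=
    MeasureTheory.intervalIntegral_tendsto_integral_Ioi a hint hblow
  have hev : ∀ᶠ t in nhdsWithin tstar (Iio tstar), (∫ τ in a..(φ t), f τ) ≤ tstar := by
    have h1 : Ioi (0:ℝ) ∈ nhdsWithin tstar (Iio tstar) :=
      nhdsWithin_le_nhds (isOpen_Ioi.mem_nhds htstar)
    filter_upwards [h1, self_mem_nhdsWithin] with t ht0 htlt
    exact le_trans (key t ⟨le_of_lt ht0, htlt⟩) (le_of_lt htlt)
  exact le_of_tendsto hlim hev

/-- Remark 1 of the paper: if `φ > 0` blows up at the finite time `tstar` and satisfies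
`φ' ≤ c1 φ + c2 φ^(3/2) + c3 φ³` on `(0, tstar)`, then
`τ ↦ 1/(c1 τ + c2 τ^(3/2) + c3 τ³)` is integrable on `[φ 0, ∞)` and
`tstar ≥ ∫_{φ 0}^∞ dτ/(c1 τ + c2 τ^(3/2) + c3 τ³)`. -/
theorem blow_up_time_integral_lower_bound_3D
    (tstar c1 c2 c3 : ℝ) (htstar : 0 < tstar)
    (hc1 : 0 < c1) (hc2 : 0 < c2) (hc3 : 0 < c3)
    (φ : ℝ → ℝ)
    (hcont : ContinuousOn φ (Ico 0 tstar))
    (hdiff : ∀ t ∈ Ioo 0 tstar, DifferentiableAt ℝ φ t)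
    (hφ0 : 0 < φ 0)
    (hpos : ∀ t ∈ Ico 0 tstar, 0 < φ t)
    (hblow : Tendsto φ (nhdsWithin tstar (Iio tstar)) atTop)
    (hineq : ∀ t ∈ Ioo 0 tstar,
      deriv φ t ≤ c1 * φ t + c2 * φ t ^ ((3 : ℝ) / 2) + c3 * φ t ^ 3) :
    IntegrableOn (fun τ : ℝ => 1 / (c1 * τ + c2 * τ ^ ((3 : ℝ) / 2) + c3 * τ ^ 3))
      (Ici (φ 0)) ∧
    tstar ≥ ∫ τ in Ici (φ 0), 1 / (c1 * τ + c2 * τ ^ ((3 : ℝ) / 2) + c3 * τ ^ 3) := by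
  set g : ℝ → ℝ := fun τ => c1 * τ + c2 * τ ^ ((3 : ℝ) / 2) + c3 * τ ^ 3 with hgdef
  have hgpos : ∀ τ : ℝ, 0 < τ → 0 < g τ := by
    intro τ hτ
    have h32 : 0 < τ ^ ((3:ℝ)/2) := Real.rpow_pos_of_pos hτ _
    have h3 : 0 < τ ^ 3 := pow_pos hτ 3
    simp only [hgdef]
    positivity
  have hgcont : ∀ τ : ℝ, 0 < τ → ContinuousAt g τ := by
    intro τ hτ
    have h1 : ContinuousAt (fun x : ℝ => x ^ ((3:ℝ)/2)) τ :=
      Real.continuousAt_rpow_const τ _ (Or.inl hτ.ne')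
    exact ((continuousAt_const.mul continuousAt_id).add
      (continuousAt_const.mul h1)).add (continuousAt_const.mul (continuousAt_id.pow 3))
  -- integrability by comparison with c3⁻¹ τ^(-3)
  have hint : IntegrableOn (fun τ : ℝ => 1 / g τ) (Ioi (φ 0)) := by
    have hbound : IntegrableOn (fun τ : ℝ => c3⁻¹ * τ ^ (-3 : ℝ)) (Ioi (φ 0)) :=
      ((integrableOn_Ioi_rpow_iff hφ0).2 (by norm_num)).const_mul _
    apply Integrable.mono' hbound
    · have hfco : ContinuousOn (fun τ : ℝ => 1 / g τ) (Ioi (φ 0)) := by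
        intro τ hτ
        have hτ0 : 0 < τ := lt_trans hφ0 hτ
        exact (continuousAt_const.div (hgcont τ hτ0) (hgpos τ hτ0).ne').continuousWithinAt
      exact hfco.aestronglyMeasurable measurableSet_Ioi
    · rw [ae_restrict_iff' measurableSet_Ioi]
      filter_upwards with τ hτ
      have hτ0 : 0 < τ := lt_trans hφ0 hτ
      have hg0 : 0 < g τ := hgpos τ hτ0
      have hc3τ : 0 < c3 * τ ^ 3 := by positivity
      have hle : c3 * τ ^ 3 ≤ g τ := by
        have h1 : 0 ≤ c1 * τ := by positivity
        have h2 : 0 ≤ c2 * τ ^ ((3:ℝ)/2) := by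
          have := (Real.rpow_pos_of_pos hτ0 ((3:ℝ)/2)).le
          positivity
        simp only [hgdef]; linarith
      have hrw : c3⁻¹ * τ ^ (-3 : ℝ) = 1 / (c3 * τ ^ 3) := by
        rw [show (-3 : ℝ) = -(3:ℕ) by norm_num, Real.rpow_neg hτ0.le, Real.rpow_natCast]
        field_simp
      rw [Real.norm_eq_abs, abs_of_nonneg (by positivity : (0:ℝ) ≤ 1 / g τ), hrw]
      exact one_div_le_one_div_of_le hc3τ hle
  constructor
  · exact (integrableOn_Ici_iff_integrableOn_Ioi).2 hint
  · rw [MeasureTheory.integral_Ici_eq_integral_Ioi]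
    exact blow_up_aux tstar htstar φ g hgpos hgcont hcont hdiff hφ0 hpos hblow hineq hint
end

section
/- Let t* ∈ (0, ∞) be finite, let c1, c2, c3 > 0, and let φ : [0, t*) → ℝ be continuous on [0, t*), differentiable on (0, t*), with φ(0) > 0, φ(t) > 0 for all t, φ(t) → ∞ as t → t*⁻, and φ'(t) ≤ c1·φ(t) + c2·φ(t)^{3/2} + c3·φ(t)² for all t ∈ (0, t*). Then the function τ ↦ 1/(c1·τ + c2·τ^{3/2} + c3·τ²) is integrable on [φ(0), ∞) and t* ≥ ∫_{φ(0)}^{∞} dτ/(c1·τ + c2·τ^{3/2} + c3·τ²). -/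
/-!
Separation of variables without the absorption term: with `F(x) = ∫_{φ s}^x dτ / g τ`, the
function `t ↦ t - F (φ t)` is nondecreasing as long as `φ' ≤ g ∘ φ`, so `F (φ t) ≤ t - s`.
Since `φ` exceeds every level before the blow-up time `T`, the partial integrals of the
positive function `1 / g` are bounded by `T - s`, which gives both integrability on
`[φ s, ∞)` and the lower bound on `T`.
-/

open Real Set Filter MeasureTheory Topology

theorem hasDerivAt_intervalIntegral_of_continuousOn_Ioi {f : ℝ → ℝ} {c a x : ℝ}
    (hf : ContinuousOn f (Ioi c)) (ha : c < a) (hx : c < x) :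
    HasDerivAt (fun y => ∫ τ in a..y, f τ) (f x) x :=
  intervalIntegral.integral_hasDerivAt_right
    (hf.mono fun _ hy => (lt_min ha hx).trans_le hy.1).intervalIntegrable
    (hf.stronglyMeasurableAtFilter isOpen_Ioi x hx)
    (hf.continuousAt (Ioi_mem_nhds hx))

section Comparison

variable {g φ : ℝ → ℝ} {s T : ℝ}

theorem intervalIntegral_inv_comp_le_sub (hg : ContinuousOn g (Ioi 0))
    (hg_pos : ∀ x, 0 < x → 0 < g x) (hφ_cont : ContinuousOn φ (Ico s T))
    (hφ_diff : ∀ t ∈ Ioo s T, DifferentiableAt ℝ φ t) (hφ_pos : ∀ t ∈ Ico s T, 0 < φ t)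
    (hφ_le : ∀ t ∈ Ioo s T, deriv φ t ≤ g (φ t)) {t : ℝ} (ht : t ∈ Ico s T) :
    ∫ τ in φ s..φ t, (g τ)⁻¹ ≤ t - s := by
  have hs : s ∈ Ico s T := ⟨le_rfl, ht.1.trans_lt ht.2⟩
  set F : ℝ → ℝ := fun x => ∫ τ in φ s..x, (g τ)⁻¹
  have hF : ∀ x, 0 < x → HasDerivAt F (g x)⁻¹ x := fun x hx =>
    hasDerivAt_intervalIntegral_of_continuousOn_Ioi
      (hg.inv₀ fun y hy => (hg_pos y hy).ne') (hφ_pos s hs) hx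
  have hmono : MonotoneOn (fun t => t - F (φ t)) (Ico s T) := by
    refine monotoneOn_of_hasDerivWithinAt_nonneg (convex_Ico s T)
      (f' := fun t => 1 - (g (φ t))⁻¹ * deriv φ t) ?_ ?_ ?_
    · exact continuousOn_id.sub <|
        ContinuousOn.comp (fun x hx => (hF x hx).continuousAt.continuousWithinAt) hφ_cont hφ_pos
    · rw [interior_Ico]
      intro u hu
      have hφu := hF _ (hφ_pos u (Ioo_subset_Ico_self hu))
      exact ((hasDerivAt_id u).sub (hφu.comp u (hφ_diff u hu).hasDerivAt)).hasDerivWithinAt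
    · rw [interior_Ico]
      intro u hu
      exact sub_nonneg.2 <| inv_mul_le_one_of_le₀ (hφ_le u hu)
        (hg_pos _ (hφ_pos u (Ioo_subset_Ico_self hu))).le
  have h := hmono hs ht ht.1
  simp only [F, intervalIntegral.integral_same, sub_zero] at h
  linarith

theorem intervalIntegrable_inv_of_pos (hg : ContinuousOn g (Ioi 0))
    (hg_pos : ∀ x, 0 < x → 0 < g x) {a b : ℝ} (ha : 0 < a) (hb : 0 < b) :
    IntervalIntegrable (fun τ => (g τ)⁻¹) volume a b :=
  ((hg.inv₀ fun y hy => (hg_pos y hy).ne').mono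
    fun _ hy => (lt_min ha hb).trans_le hy.1).intervalIntegrable

theorem intervalIntegral_inv_le_of_tendsto_atTop (hg : ContinuousOn g (Ioi 0))
    (hg_pos : ∀ x, 0 < x → 0 < g x) (hφ_cont : ContinuousOn φ (Ico s T))
    (hφ_diff : ∀ t ∈ Ioo s T, DifferentiableAt ℝ φ t) (hφ_pos : ∀ t ∈ Ico s T, 0 < φ t)
    (hφ_le : ∀ t ∈ Ioo s T, deriv φ t ≤ g (φ t)) (hφ_blow : Tendsto φ (𝓝[<] T) atTop)
    (hsT : s < T) {x : ℝ} (hx : φ s ≤ x) :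
    ∫ τ in φ s..x, (g τ)⁻¹ ≤ T - s := by
  obtain ⟨t, hxt, ht⟩ :=
    ((hφ_blow.eventually (eventually_ge_atTop x)).and (Ioo_mem_nhdsLT hsT)).exists
  have hφs : 0 < φ s := hφ_pos s ⟨le_rfl, hsT⟩
  calc ∫ τ in φ s..x, (g τ)⁻¹
      ≤ ∫ τ in φ s..φ t, (g τ)⁻¹ := by
        refine intervalIntegral.integral_mono_interval le_rfl hx hxt ?_
          (intervalIntegrable_inv_of_pos hg hg_pos hφs (hφ_pos t (Ioo_subset_Ico_self ht)))
        filter_upwards [ae_restrict_mem measurableSet_Ioc] with τ hτ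
        exact inv_nonneg.2 (hg_pos τ (hφs.trans hτ.1)).le
    _ ≤ t - s := intervalIntegral_inv_comp_le_sub hg hg_pos hφ_cont hφ_diff hφ_pos hφ_le
        (Ioo_subset_Ico_self ht)
    _ ≤ T - s := by linarith [ht.2]

theorem integrableOn_inv_and_integral_le_of_tendsto_atTop (hg : ContinuousOn g (Ioi 0))
    (hg_pos : ∀ x, 0 < x → 0 < g x) (hφ_cont : ContinuousOn φ (Ico s T))
    (hφ_diff : ∀ t ∈ Ioo s T, DifferentiableAt ℝ φ t) (hφ_pos : ∀ t ∈ Ico s T, 0 < φ t)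
    (hφ_le : ∀ t ∈ Ioo s T, deriv φ t ≤ g (φ t)) (hφ_blow : Tendsto φ (𝓝[<] T) atTop)
    (hsT : s < T) :
    IntegrableOn (fun τ => (g τ)⁻¹) (Ioi (φ s)) ∧ ∫ τ in Ioi (φ s), (g τ)⁻¹ ≤ T - s := by
  have hφs : 0 < φ s := hφ_pos s ⟨le_rfl, hsT⟩
  have hbound : ∀ᶠ x in atTop, ∫ τ in φ s..x, (g τ)⁻¹ ≤ T - s :=
    (eventually_ge_atTop _).mono fun x hx =>
      intervalIntegral_inv_le_of_tendsto_atTop hg hg_pos hφ_cont hφ_diff hφ_pos hφ_le hφ_blow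
        hsT hx
  have hint : IntegrableOn (fun τ => (g τ)⁻¹) (Ioi (φ s)) := by
    refine integrableOn_Ioi_of_intervalIntegral_norm_bounded (T - s) (φ s)
      (fun x => ?_) tendsto_id ?_
    · exact (intervalIntegrable_inv_of_pos hg hg_pos hφs (lt_max_of_lt_right hφs)).1.mono_set
        (Ioc_subset_Ioc_right (le_max_left x _))
    · filter_upwards [hbound, eventually_ge_atTop (φ s)] with x hx hsx
      refine (intervalIntegral.integral_congr fun τ hτ => ?_).trans_le hx
      rw [id, uIcc_of_le hsx] at hτ
      exact Real.norm_of_nonneg (inv_nonneg.2 (hg_pos τ (hφs.trans_le hτ.1)).le)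
  exact ⟨hint, le_of_tendsto (intervalIntegral_tendsto_integral_Ioi _ hint tendsto_id) hbound⟩

end Comparison

theorem blow_up_time_integral_lower_bound_2D_general
    (tstar c1 c2 c3 : ℝ) (htstar : 0 < tstar)
    (hc1 : 0 < c1) (hc2 : 0 < c2) (hc3 : 0 < c3)
    (φ : ℝ → ℝ)
    (hcont : ContinuousOn φ (Ico 0 tstar))
    (hdiff : ∀ t ∈ Ioo 0 tstar, DifferentiableAt ℝ φ t)
    (hpos : ∀ t ∈ Ico 0 tstar, 0 < φ t)
    (hblow : Tendsto φ (nhdsWithin tstar (Iio tstar)) atTop)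
    (hineq : ∀ t ∈ Ioo 0 tstar,
      deriv φ t ≤ c1 * φ t + c2 * φ t ^ ((3 : ℝ) / 2) + c3 * φ t ^ 2) :
    IntegrableOn (fun τ : ℝ => 1 / (c1 * τ + c2 * τ ^ ((3 : ℝ) / 2) + c3 * τ ^ 2))
      (Ici (φ 0)) ∧
    tstar ≥ ∫ τ in Ici (φ 0), 1 / (c1 * τ + c2 * τ ^ ((3 : ℝ) / 2) + c3 * τ ^ 2) := by
  have hg : Continuous fun τ : ℝ => c1 * τ + c2 * τ ^ ((3 : ℝ) / 2) + c3 * τ ^ 2 := by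
    fun_prop (disch := norm_num)
  have hg_pos : ∀ τ : ℝ, 0 < τ → 0 < c1 * τ + c2 * τ ^ ((3 : ℝ) / 2) + c3 * τ ^ 2 :=
    fun τ hτ => by positivity
  obtain ⟨hint, hle⟩ := integrableOn_inv_and_integral_le_of_tendsto_atTop hg.continuousOn hg_pos
    hcont hdiff hpos hineq hblow htstar
  simp only [one_div, integral_Ici_eq_integral_Ioi]
  exact ⟨(integrableOn_Ici_iff_integrableOn_Ioi).2 hint, by simpa using hle⟩

/-- Remark 2 of the paper: if `φ > 0` blows up at the finite time `tstar` and satisfies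
`φ' ≤ c1 φ + c2 φ^(3/2) + c3 φ²` on `(0, tstar)`, then
`τ ↦ 1/(c1 τ + c2 τ^(3/2) + c3 τ²)` is integrable on `[φ 0, ∞)` and
`tstar ≥ ∫_{φ 0}^∞ dτ/(c1 τ + c2 τ^(3/2) + c3 τ²)`. -/
theorem blow_up_time_integral_lower_bound_2D
    (tstar c1 c2 c3 : ℝ) (htstar : 0 < tstar)
    (hc1 : 0 < c1) (hc2 : 0 < c2) (hc3 : 0 < c3)
    (φ : ℝ → ℝ)
    (hcont : ContinuousOn φ (Ico 0 tstar))
    (hdiff : ∀ t ∈ Ioo 0 tstar, DifferentiableAt ℝ φ t)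
    (hφ0 : 0 < φ 0)
    (hpos : ∀ t ∈ Ico 0 tstar, 0 < φ t)
    (hblow : Tendsto φ (nhdsWithin tstar (Iio tstar)) atTop)
    (hineq : ∀ t ∈ Ioo 0 tstar,
      deriv φ t ≤ c1 * φ t + c2 * φ t ^ ((3 : ℝ) / 2) + c3 * φ t ^ 2) :
    IntegrableOn (fun τ : ℝ => 1 / (c1 * τ + c2 * τ ^ ((3 : ℝ) / 2) + c3 * τ ^ 2))
      (Ici (φ 0)) ∧
    tstar ≥ ∫ τ in Ici (φ 0), 1 / (c1 * τ + c2 * τ ^ ((3 : ℝ) / 2) + c3 * τ ^ 2) :=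
  blow_up_time_integral_lower_bound_2D_general tstar c1 c2 c3 htstar hc1 hc2 hc3 φ hcont hdiff hpos
    hblow hineq
end
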